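/- Let γ = (γ₁,γ₂,γ₃) ∈ ℂ⟦t⟧³ with γᵢ(0) = 0 for all i and γ ≠ 0, and assume γ is primitive (gcd(Γ(γ)) = 1) and m(γ) ≥ 2. Assume γ₂ ≠ 0 and ord(γ₂) ≤ ord(γ₃) (if γ₃ ≠ 0), so that γ₃/γ₂ ∈ ℂ⟦t⟧; let c be its constant coefficient and let γ̃ = (γ₁, γ₂, γ₃/γ₂ − c) be the strict transform of γ under the blow-up of ℂ³ along the line {y = z = 0}. Then either m(γ̃) < m(γ), or m(γ̃) = m(γ) and n(γ̃) ≤ n(γ). -/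

import Mathlib

open MvPowerSeries in
/-- Substitution (composition) of formal power series:  `substPS v f` is the formal
power series `f (v 0, v 1, …)` obtained by substituting the family `v` of power series
into `f`.  When every `v i` has zero constant coefficient (the only case in which this
notion is used), the coefficient of a monomial `e` in `f (v 0, v 1, …)` is the finite
sum, over the multi-degrees `d` of total degree at most the total degree of `e`
(coordinatewise bounded by it), of `(coeff d f) * coeff e (∏ i, (v i) ^ d i)`;
this is the usual composition of formal power series. -/
noncomputable def substPS {σ τ : Type*} [Fintype σ] [DecidableEq σ] {R : Type*}
    [CommSemiring R] (v : σ → MvPowerSeries τ R) (f : MvPowerSeries σ R) :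
    MvPowerSeries τ R :=
  fun e => ∑ d ∈ Finset.Iic (Finsupp.equivFunOnFinite.symm
      fun _ : σ => e.sum fun _ n => n),
    MvPowerSeries.coeff d f * MvPowerSeries.coeff e (∏ i, (v i) ^ (d i))

/-- `Γ(γ)`, the semigroup of a parametrized space curve `γ = (γ₁,γ₂,γ₃) ∈ ℂ⟦t⟧³`
(with each `γᵢ(0) = 0`):  the set of orders `ord (f(γ₁,γ₂,γ₃))` for
`f ∈ ℂ⟦x,y,z⟧` with `f(γ₁,γ₂,γ₃) ≠ 0`. -/
def curveSemigroup (γ : Fin 3 → PowerSeries ℂ) : Set ℕ :=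
  {j : ℕ | ∃ f : MvPowerSeries (Fin 3) ℂ,
    substPS γ f ≠ 0 ∧ PowerSeries.order (substPS γ f) = (j : ℕ∞)}

/-- The parametrization `γ` is primitive:  `gcd (Γ(γ)) = 1`, i.e. the only natural
number dividing every element of `Γ(γ)` is `1`. -/
def curvePrimitive (γ : Fin 3 → PowerSeries ℂ) : Prop :=
  ∀ d : ℕ, (∀ j ∈ curveSemigroup γ, d ∣ j) → d = 1

/-- The multiplicity `m(γ) = min (Γ(γ) ∖ {0})`. -/
noncomputable def curveMult (γ : Fin 3 → PowerSeries ℂ) : ℕ :=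
  sInf {j ∈ curveSemigroup γ | j ≠ 0}

/-- `n(γ)`, the minimum of `Γ(γ)` with all multiples of `m(γ)` removed. -/
noncomputable def curveN (γ : Fin 3 → PowerSeries ℂ) : ℕ :=
  sInf {j ∈ curveSemigroup γ | ¬ curveMult γ ∣ j}

/-! In the chart `(x, y, z) ↦ (x, y, y (c + z))` of the blow-up along `{y = z = 0}` the strict
transform `γ̃` is mapped to `γ`, so `f (γ) = (f ∘ chart) (γ̃)` for every `f`; hence
`Γ(γ) ⊆ Γ(γ̃)`. The minimum of the larger semigroup is smaller, giving `m(γ̃) ≤ m(γ)`, and when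
equality holds, `n(γ)` lies in `Γ(γ̃)` and is not a multiple of `m(γ̃) = m(γ)`. -/

namespace MvPowerSeries

variable {σ τ R : Type*} [Fintype σ]

theorem coeff_prod_pow_eq_zero_of_degree_lt [CommSemiring R] {v : σ → MvPowerSeries τ R}
    (hv : ∀ i, constantCoeff (v i) = 0) {d : σ → ℕ} {e : τ →₀ ℕ} (h : e.degree < ∑ i, d i) :
    coeff e (∏ i, v i ^ d i) = 0 := by
  refine coeff_of_lt_order ?_
  calc (e.degree : ℕ∞) < ∑ i, (d i : ℕ∞) := by exact_mod_cast h
    _ ≤ ∑ i, (v i ^ d i).order :=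
      Finset.sum_le_sum fun i _ ↦ le_order_pow_of_constantCoeff_eq_zero _ (hv i)
    _ ≤ _ := le_order_prod _ _

theorem substPS_eq_subst [DecidableEq σ] [CommRing R] {v : σ → MvPowerSeries τ R}
    (hv : ∀ i, constantCoeff (v i) = 0) (f : MvPowerSeries σ R) : substPS v f = subst v f := by
  ext e
  rw [coeff_subst (hasSubst_of_constantCoeff_zero hv), finsum_eq_sum_of_support_subset
    (s := Finset.Iic (Finsupp.equivFunOnFinite.symm fun _ : σ ↦ e.degree))]
  · simp only [Finsupp.prod_fintype _ _ (fun i ↦ pow_zero _), smul_eq_mul]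
    rfl
  · intro d hd
    contrapose! hd
    obtain ⟨i, hi⟩ : ∃ i, e.degree < d i := by
      simpa [Finsupp.le_def] using hd
    rw [Function.mem_support, not_not, Finsupp.prod_fintype _ _ (fun i ↦ pow_zero _),
      coeff_prod_pow_eq_zero_of_degree_lt hv
        (hi.trans_le (Finset.single_le_sum (fun _ _ ↦ Nat.zero_le _) (Finset.mem_univ i))),
      smul_zero]

end MvPowerSeries

section

open MvPowerSeries

theorem curveSemigroup_subset_of_eq_subst {γ γ' : Fin 3 → PowerSeries ℂ}
    (w : Fin 3 → MvPowerSeries (Fin 3) ℂ) (hγ' : ∀ i, constantCoeff (γ' i) = 0)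
    (hw : ∀ i, constantCoeff (w i) = 0) (h : γ = fun i ↦ subst γ' (w i)) :
    curveSemigroup γ ⊆ curveSemigroup γ' := by
  have hγ : ∀ i, constantCoeff (γ i) = 0 := fun i ↦ by
    rw [h]; exact constantCoeff_subst_eq_zero (hasSubst_of_constantCoeff_zero hγ') hγ' (hw i)
  have hcomp (f : MvPowerSeries (Fin 3) ℂ) : substPS γ' (subst w f) = substPS γ f := by
    rw [substPS_eq_subst hγ', substPS_eq_subst hγ, h, subst_comp_subst_apply
      (hasSubst_of_constantCoeff_zero hw) (hasSubst_of_constantCoeff_zero hγ')]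
  rintro j ⟨f, hf, hord⟩
  exact ⟨subst w f, hcomp f ▸ hf, hcomp f ▸ hord⟩

theorem curveSemigroup_subset_strictTransform {γ₁ γ₂ γ₃ δ : PowerSeries ℂ}
    (hc₁ : PowerSeries.constantCoeff γ₁ = 0) (hc₂ : PowerSeries.constantCoeff γ₂ = 0)
    (hδ : γ₃ = γ₂ * δ) :
    curveSemigroup ![γ₁, γ₂, γ₃] ⊆
      curveSemigroup ![γ₁, γ₂, δ - PowerSeries.C (PowerSeries.constantCoeff δ)] := by
  set c := PowerSeries.constantCoeff δ
  have hγ' : ∀ i, constantCoeff (![γ₁, γ₂, δ - PowerSeries.C c] i) = 0 := by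
    intro i
    fin_cases i
    exacts [hc₁, hc₂, show PowerSeries.constantCoeff (δ - PowerSeries.C c) = 0 by simp [c]]
  have ha := hasSubst_of_constantCoeff_zero hγ'
  refine curveSemigroup_subset_of_eq_subst ![X 0, X 1, X 1 * (C c + X 2)] hγ' ?_ ?_
  · intro i; fin_cases i <;> simp
  · funext i
    fin_cases i
    · exact (subst_X ha 0).symm
    · exact (subst_X ha 1).symm
    · show γ₃ = subst _ (X 1 * (C c + X 2))
      rw [subst_mul ha, subst_add ha, subst_X ha, subst_X ha, subst_C, hδ]
      simp only [Matrix.cons_val_one, Matrix.cons_val_two, Matrix.cons_val_zero,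
        Matrix.head_cons, Matrix.tail_cons]
      rw [show (C c : PowerSeries ℂ) = PowerSeries.C c from rfl, add_sub_cancel]

theorem curveMult_le_of_subset {γ γ' : Fin 3 → PowerSeries ℂ}
    (h : curveSemigroup γ ⊆ curveSemigroup γ') (hm : curveMult γ ≠ 0) :
    curveMult γ' ≤ curveMult γ := by
  have hmem := Nat.sInf_mem (Nat.nonempty_of_pos_sInf (Nat.pos_of_ne_zero hm))
  exact Nat.sInf_le ⟨h hmem.1, hmem.2⟩

theorem exists_mem_curveSemigroup_not_curveMult_dvd {γ : Fin 3 → PowerSeries ℂ}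
    (hprim : curvePrimitive γ) (hm : curveMult γ ≠ 1) :
    {j ∈ curveSemigroup γ | ¬ curveMult γ ∣ j}.Nonempty := by
  by_contra hempty
  refine hm (hprim _ fun j hj ↦ ?_)
  by_contra hdvd
  exact hempty ⟨j, hj, hdvd⟩

theorem curveN_le_of_subset {γ γ' : Fin 3 → PowerSeries ℂ}
    (h : curveSemigroup γ ⊆ curveSemigroup γ') (heq : curveMult γ' = curveMult γ)
    (hprim : curvePrimitive γ) (hm : curveMult γ ≠ 1) : curveN γ' ≤ curveN γ := by
  have hmem := Nat.sInf_mem (exists_mem_curveSemigroup_not_curveMult_dvd hprim hm)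
  exact Nat.sInf_le ⟨h hmem.1, heq ▸ hmem.2⟩

end

open PowerSeries in
theorem strict_transform_line_blowup_does_not_increase_general (γ₁ γ₂ γ₃ : PowerSeries ℂ)
    (hc₁ : constantCoeff γ₁ = 0) (hc₂ : constantCoeff γ₂ = 0)
    (hprim : curvePrimitive ![γ₁, γ₂, γ₃])
    (hm : 2 ≤ curveMult ![γ₁, γ₂, γ₃])
    (δ : PowerSeries ℂ) (hδ : γ₃ = γ₂ * δ) :
    curveMult ![γ₁, γ₂, δ - C (constantCoeff δ)] < curveMult ![γ₁, γ₂, γ₃] ∨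
      (curveMult ![γ₁, γ₂, δ - C (constantCoeff δ)] = curveMult ![γ₁, γ₂, γ₃] ∧
        curveN ![γ₁, γ₂, δ - C (constantCoeff δ)] ≤ curveN ![γ₁, γ₂, γ₃]) := by
  have hsub := curveSemigroup_subset_strictTransform hc₁ hc₂ hδ
  rcases (curveMult_le_of_subset hsub (by omega)).lt_or_eq with hlt | heq
  · exact Or.inl hlt
  · exact Or.inr ⟨heq, curveN_le_of_subset hsub heq hprim (by omega)⟩

open PowerSeries in
/-- Let `γ = (γ₁,γ₂,γ₃) ∈ ℂ⟦t⟧³` with `γᵢ(0) = 0` for all `i` and `γ ≠ 0`, and assume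
`γ` is primitive and `m(γ) ≥ 2`.  Assume `γ₂ ≠ 0` and `ord(γ₂) ≤ ord(γ₃)` (automatic
if `γ₃ = 0`, since `ord 0 = ∞`), so that `γ₃/γ₂ ∈ ℂ⟦t⟧` (say `γ₃ = γ₂·δ`); let `c` be
its constant coefficient and let `γ̃ = (γ₁, γ₂, γ₃/γ₂ − c)` be the strict transform of
`γ` under the blow-up of `ℂ³` along the line `{y = z = 0}`.  Then either
`m(γ̃) < m(γ)`, or `m(γ̃) = m(γ)` and `n(γ̃) ≤ n(γ)`. -/
theorem strict_transform_line_blowup_does_not_increase (γ₁ γ₂ γ₃ : PowerSeries ℂ)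
    (hc₁ : constantCoeff γ₁ = 0) (hc₂ : constantCoeff γ₂ = 0)
    (hc₃ : constantCoeff γ₃ = 0)
    (hne : ¬(γ₁ = 0 ∧ γ₂ = 0 ∧ γ₃ = 0))
    (hprim : curvePrimitive ![γ₁, γ₂, γ₃])
    (hm : 2 ≤ curveMult ![γ₁, γ₂, γ₃])
    (h₂ : γ₂ ≠ 0)
    (hord₃ : order γ₂ ≤ order γ₃)
    (δ : PowerSeries ℂ) (hδ : γ₃ = γ₂ * δ) :
    curveMult ![γ₁, γ₂, δ - C (constantCoeff δ)] < curveMult ![γ₁, γ₂, γ₃] ∨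
      (curveMult ![γ₁, γ₂, δ - C (constantCoeff δ)] = curveMult ![γ₁, γ₂, γ₃] ∧
        curveN ![γ₁, γ₂, δ - C (constantCoeff δ)] ≤ curveN ![γ₁, γ₂, γ₃]) :=
  strict_transform_line_blowup_does_not_increase_general γ₁ γ₂ γ₃ hc₁ hc₂ hprim hm δ hδ
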